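/- arXiv:2506.11379 — 4 statements merged into one kernel-verified Lean document; each statement's English description precedes it below -/
import Mathlib

section
/- Assume K is diagonal in the v_n-basis and that the kernel of K is {0}. Let y^δ ∈ Y, α > 0, and suppose the series x* = ∑_n (1/σ_n²) S_α(σ_n ⟨y^δ, u_n⟩) v_n converges in X. Then x* is the unique global minimizer of Φ_α: for every h ∈ X with h ≠ 0 one has Φ_α(x* + h) > Φ_α(x*). -/
/-!
Write `cₙ = ⟪x*, vₙ⟫`, `hₙ = ⟪h, vₙ⟫` and `bₙ = ⟪y^δ, uₙ⟫`. Expanding the square,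
`Φ(x* + h) - Φ(x*) = ‖K h‖² + ∑ₙ [2 σₙ hₙ (σₙ cₙ - bₙ) + α (|cₙ + hₙ| - |cₙ|)]`,
the cross term being computed by Parseval in the basis `v`. Each bracket is nonnegative:
`cₙ = S_α(σₙ bₙ) / σₙ²` minimizes `t ↦ (σₙ t - bₙ)² + α |t|`, and the bracket is the
subgradient inequality at this minimizer. Injectivity of `K` gives `‖K h‖² > 0`, and the bound
`α |cₙ| ≤ bₙ²` together with Bessel's inequality makes `Φ(x*)` finite.
-/

open scoped InnerProductSpace ENNReal

noncomputable def softThresh (α t : ℝ) : ℝ :=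
  if t ≤ -(α / 2) then t + α / 2
  else if α / 2 ≤ t then t - α / 2
  else 0

section
variable {ι 𝕜 E F : Type*} [RCLike 𝕜] [NormedAddCommGroup E] [InnerProductSpace 𝕜 E]
  [NormedAddCommGroup F] [InnerProductSpace 𝕜 F]

theorem Orthonormal.inner_eq_of_hasSum {v : ι → E} (hv : Orthonormal 𝕜 v) {c : ι → 𝕜} {x : E}
    (hx : HasSum (fun i => c i • v i) x) (j : ι) : ⟪v j, x⟫_𝕜 = c j := by
  classical
  have hj := (innerSL 𝕜 (v j)).hasSum hx
  simp only [innerSL_apply_apply, inner_smul_right, orthonormal_iff_ite.1 hv, mul_ite, mul_one,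
    mul_zero] at hj
  simpa using hj.unique (hasSum_single j fun i hi => if_neg (Ne.symm hi))

theorem HilbertBasis.hasSum_inner_apply_mul_inner [CompleteSpace E] [CompleteSpace F]
    (B : HilbertBasis ι 𝕜 E) (K : E →L[𝕜] F) (w : F) (z : E) :
    HasSum (fun i => ⟪w, K (B i)⟫_𝕜 * ⟪B i, z⟫_𝕜) ⟪w, K z⟫_𝕜 := by
  simpa only [ContinuousLinearMap.adjoint_inner_left] using
    B.hasSum_inner_mul_inner (ContinuousLinearMap.adjoint K w) z

end

section
variable {ι : Type*}

theorem ENNReal.ofReal_add_mul_tsum_ofReal {r α : ℝ} {a : ι → ℝ} (hr : 0 ≤ r) (hα : 0 ≤ α)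
    (ha₀ : ∀ i, 0 ≤ a i) (ha : Summable a) :
    ENNReal.ofReal r + ENNReal.ofReal α * ∑' i, ENNReal.ofReal (a i)
      = ENNReal.ofReal (r + α * ∑' i, a i) := by
  rw [← ENNReal.ofReal_tsum_of_nonneg ha₀ ha, ← ENNReal.ofReal_mul hα,
    ← ENNReal.ofReal_add hr (mul_nonneg hα (tsum_nonneg ha₀))]

theorem ENNReal.ofReal_add_mul_tsum_lt_of_le_add {r s α P : ℝ} {a b p : ι → ℝ} (hr : 0 ≤ r)
    (hs : 0 ≤ s) (hα : 0 < α) (ha₀ : ∀ i, 0 ≤ a i) (hb₀ : ∀ i, 0 ≤ b i) (ha : Summable a)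
    (hp : HasSum p P) (hab : ∀ i, α * a i ≤ α * b i + p i) (hrs : r + P < s) :
    ENNReal.ofReal r + ENNReal.ofReal α * ∑' i, ENNReal.ofReal (a i)
      < ENNReal.ofReal s + ENNReal.ofReal α * ∑' i, ENNReal.ofReal (b i) := by
  rw [ENNReal.ofReal_add_mul_tsum_ofReal hr hα.le ha₀ ha]
  by_cases htop : ∑' i, ENNReal.ofReal (b i) = ⊤
  · rw [htop, ENNReal.mul_top (ENNReal.ofReal_pos.2 hα).ne', add_top]
    exact ENNReal.ofReal_lt_top
  have hb : Summable b := by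
    simpa only [ENNReal.toReal_ofReal (hb₀ _)] using ENNReal.summable_toReal htop
  rw [ENNReal.ofReal_add_mul_tsum_ofReal hs hα.le hb₀ hb,
    ENNReal.ofReal_lt_ofReal_iff_of_nonneg (add_nonneg hr (mul_nonneg hα.le (tsum_nonneg ha₀)))]
  have hsum : α * ∑' i, a i ≤ α * ∑' i, b i + P := by
    rw [← tsum_mul_left, ← tsum_mul_left, ← hp.tsum_eq,
      ← Summable.tsum_add (hb.mul_left α) hp.summable]
    exact Summable.tsum_le_tsum hab (ha.mul_left α) ((hb.mul_left α).add hp.summable)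
  linarith

end

lemma mul_abs_softThresh_le_sq (α x : ℝ) : α * |softThresh α x| ≤ x ^ 2 := by
  unfold softThresh
  split_ifs with hneg hpos
  · rw [abs_of_nonpos (by linarith)]
    nlinarith [sq_nonneg (x + α / 2)]
  · rw [abs_of_nonneg (by linarith)]
    nlinarith [sq_nonneg (x - α / 2)]
  · simpa using sq_nonneg x

/-- The subgradient inequality expressing that `S_α x` minimizes `s ↦ (s - x)² + α |s|`. -/
lemma mul_abs_softThresh_le_add {α : ℝ} (hα : 0 ≤ α) (x τ : ℝ) :
    α * |softThresh α x| ≤ α * |softThresh α x + τ| + 2 * τ * (softThresh α x - x) := by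
  unfold softThresh
  split_ifs with hneg hpos
  · rw [abs_of_nonpos (by linarith)]
    nlinarith [neg_abs_le (x + α / 2 + τ)]
  · rw [abs_of_nonneg (by linarith)]
    nlinarith [le_abs_self (x - α / 2 + τ)]
  · have hx : |x| ≤ α / 2 := abs_le.mpr ⟨by linarith, by linarith⟩
    simp only [zero_add, abs_zero, mul_zero, zero_sub]
    nlinarith [le_abs_self (x * τ), abs_mul x τ, mul_le_mul_of_nonneg_right hx (abs_nonneg τ)]

/-- The minimizer of `t ↦ (σ t - b)² + α |t|`. -/
noncomputable def softThreshCoeff (α σ b : ℝ) : ℝ := (σ ^ 2)⁻¹ * softThresh α (σ * b)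

lemma mul_abs_softThreshCoeff_le_sq (α : ℝ) {σ : ℝ} (hσ : σ ≠ 0) (b : ℝ) :
    α * |softThreshCoeff α σ b| ≤ b ^ 2 := by
  have h := mul_abs_softThresh_le_sq α (σ * b)
  rw [softThreshCoeff, abs_mul, abs_of_pos (by positivity), mul_left_comm]
  calc (σ ^ 2)⁻¹ * (α * |softThresh α (σ * b)|) ≤ (σ ^ 2)⁻¹ * (σ * b) ^ 2 := by gcongr
    _ = b ^ 2 := by field_simp

lemma mul_abs_softThreshCoeff_le_add {α σ : ℝ} (hα : 0 ≤ α) (hσ : σ ≠ 0) (b t : ℝ) :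
    α * |softThreshCoeff α σ b| ≤
      α * |softThreshCoeff α σ b + t| + 2 * (σ * t) * (σ * softThreshCoeff α σ b - b) := by
  have hσ2 : 0 < σ ^ 2 := by positivity
  have h := mul_le_mul_of_nonneg_left (mul_abs_softThresh_le_add hα (σ * b) (σ ^ 2 * t))
    (inv_pos.2 hσ2).le
  rw [softThreshCoeff]
  set s := softThresh α (σ * b)
  have hshift : (σ ^ 2)⁻¹ * s + t = (σ ^ 2)⁻¹ * (s + σ ^ 2 * t) := by field_simp
  have hcross : 2 * (σ * t) * (σ * ((σ ^ 2)⁻¹ * s) - b)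
      = (σ ^ 2)⁻¹ * (2 * (σ ^ 2 * t) * (s - σ * b)) := by
    field_simp
  rw [hshift, hcross, abs_mul, abs_mul, abs_of_pos (inv_pos.2 hσ2)]
  linarith

theorem l1SVD_unique_global_minimizer_general {X Y : Type*}
    [NormedAddCommGroup X] [InnerProductSpace ℝ X] [CompleteSpace X]
    [NormedAddCommGroup Y] [InnerProductSpace ℝ Y] [CompleteSpace Y]
    (K : X →L[ℝ] Y)
    (hker : LinearMap.ker (K : X →ₗ[ℝ] Y) = ⊥)
    (σ : ℕ → ℝ) (v : ℕ → X) (u : ℕ → Y)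
    (hσ : ∀ n, 0 < σ n) (hv : Orthonormal ℝ v) (hu : Orthonormal ℝ u)
    (hKv : ∀ n, K (v n) = σ n • u n)
    (hKadj : ∀ n, (ContinuousLinearMap.adjoint K) (u n) = σ n • v n)
    (hcomplete : (Submodule.span ℝ (Set.range v)).topologicalClosure = ⊤)
    (yδ : Y) (α : ℝ) (hα : 0 < α)
    (Φ : X → ℝ≥0∞)
    (hΦ : ∀ x, Φ x = ENNReal.ofReal (‖K x - yδ‖ ^ 2)
        + ENNReal.ofReal α * ∑' n, ENNReal.ofReal (|⟪x, v n⟫_ℝ|))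
    (xstar : X)
    (hxstar : HasSum (fun n => ((σ n ^ 2)⁻¹ * softThresh α (σ n * ⟪yδ, u n⟫_ℝ)) • v n) xstar) :
    ∀ h : X, h ≠ 0 → Φ xstar < Φ (xstar + h) := by
  intro h hh
  set b := fun n => ⟪yδ, u n⟫_ℝ
  set c := fun n => softThreshCoeff α (σ n) (b n)
  have hcoef : ∀ n, ⟪xstar, v n⟫_ℝ = c n := fun n => by
    rw [real_inner_comm]
    exact hv.inner_eq_of_hasSum hxstar n
  have hc : Summable fun n => |c n| := by
    refine .of_nonneg_of_le (fun n => abs_nonneg _) (fun n => ?_)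
      ((hu.inner_products_summable (x := yδ)).div_const α)
    rw [le_div_iff₀' hα, Real.norm_eq_abs, sq_abs, real_inner_comm]
    exact mul_abs_softThreshCoeff_le_sq α (hσ n).ne' (b n)
  have hresidual : ∀ n, ⟪K xstar - yδ, K (v n)⟫_ℝ = σ n * (σ n * c n - b n) := by
    intro n
    rw [hKv, inner_smul_right, inner_sub_left, ← ContinuousLinearMap.adjoint_inner_right, hKadj,
      inner_smul_right, hcoef]
  have hcross : HasSum (fun n => 2 * (σ n * ⟪h, v n⟫_ℝ) * (σ n * c n - b n))
      (2 * ⟪K xstar - yδ, K h⟫_ℝ) := by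
    have hparseval := ((HilbertBasis.mk hv hcomplete.ge).hasSum_inner_apply_mul_inner K
      (K xstar - yδ) h).mul_left 2
    simp only [HilbertBasis.coe_mk, hresidual] at hparseval
    refine hparseval.congr_fun fun n => ?_
    rw [real_inner_comm]
    ring
  have hKh : 0 < ‖K h‖ ^ 2 := by
    have : K h ≠ 0 := fun h0 => hh (LinearMap.ker_eq_bot.mp hker (by simpa using h0))
    positivity
  have hnorm : ‖K (xstar + h) - yδ‖ ^ 2
      = ‖K xstar - yδ‖ ^ 2 + 2 * ⟪K xstar - yδ, K h⟫_ℝ + ‖K h‖ ^ 2 := by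
    rw [map_add, add_sub_right_comm, norm_add_sq_real]
  simp only [hΦ, inner_add_left, hcoef]
  refine ENNReal.ofReal_add_mul_tsum_lt_of_le_add (sq_nonneg _) (sq_nonneg _) hα
    (fun _ => abs_nonneg _) (fun _ => abs_nonneg _) hc hcross
    (fun n => mul_abs_softThreshCoeff_le_add hα.le (hσ n).ne' (b n) _) (by linarith)

/-- If the compact operator `K` is diagonal in the `v n`-basis, has trivial kernel, `α > 0`,
and the series `x* = ∑ (1/σ_n²) S_α(σ_n ⟨y^δ, u_n⟩) v_n` converges in `X`, then `x*` is the
unique global minimizer of `Φ_α`: for every `h ≠ 0` one has `Φ_α(x* + h) > Φ_α(x*)`. -/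
theorem l1SVD_unique_global_minimizer {X Y : Type*}
    [NormedAddCommGroup X] [InnerProductSpace ℝ X] [CompleteSpace X]
    [NormedAddCommGroup Y] [InnerProductSpace ℝ Y] [CompleteSpace Y]
    (K : X →L[ℝ] Y) (hK : IsCompactOperator K)
    (hker : LinearMap.ker (K : X →ₗ[ℝ] Y) = ⊥)
    (σ : ℕ → ℝ) (v : ℕ → X) (u : ℕ → Y)
    (hσ : ∀ n, 0 < σ n) (hv : Orthonormal ℝ v) (hu : Orthonormal ℝ u)
    (hKv : ∀ n, K (v n) = σ n • u n)
    (hKadj : ∀ n, (ContinuousLinearMap.adjoint K) (u n) = σ n • v n)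
    (hcomplete : (Submodule.span ℝ (Set.range v)).topologicalClosure = ⊤)
    (yδ : Y) (α : ℝ) (hα : 0 < α)
    (Φ : X → ℝ≥0∞)
    (hΦ : ∀ x, Φ x = ENNReal.ofReal (‖K x - yδ‖ ^ 2)
        + ENNReal.ofReal α * ∑' n, ENNReal.ofReal (|⟪x, v n⟫_ℝ|))
    (xstar : X)
    (hxstar : HasSum (fun n => ((σ n ^ 2)⁻¹ * softThresh α (σ n * ⟪yδ, u n⟫_ℝ)) • v n) xstar) :
    ∀ h : X, h ≠ 0 → Φ xstar < Φ (xstar + h) :=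
  l1SVD_unique_global_minimizer_general K hker σ v u hσ hv hu hKv hKadj hcomplete yδ α hα Φ hΦ xstar
    hxstar
end

section
/- Let {(σ_n, v_n, u_n)}_{n∈ℕ} be a singular system for the compact linear operator K : X → Y such that (u_n) spans the closure of the range of K and (v_n) spans the closure of the range of K*. Let α > 0 and c₁ > 0 satisfy σ_n ≤ c₁ √α for all n. If x = K* z for some z ∈ Y, then the ℓ¹-SVD reconstruction error from exact data satisfies ‖ ∑_n (1/σ_n²) S_α(σ_n ⟨K x, u_n⟩) v_n − x ‖ ≤ c₁ √α ‖z‖. -/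
/-!
Since `x = K* z` lies in the closed span of the `v n`, it is the sum of `x_n • v n` with
`x_n = ⟪v n, x⟫ = σ n * ⟪u n, z⟫`, and `⟪K x, u n⟫ = σ n * x_n`. The `n`-th coefficient of the
error is therefore `σ_n⁻² S_α(σ_n² x_n) - x_n`, which soft thresholding bounds by
`|x_n| ≤ c₁ √α |⟪u n, z⟫|`. Parseval's identity in `X` and Bessel's inequality in `Y` turn this
coefficientwise bound into the norm bound.
-/

open scoped InnerProductSpace

open Filter Topology Submodule

section Orthonormal

variable {ι 𝕜 E F : Type*} [RCLike 𝕜] [NormedAddCommGroup E] [InnerProductSpace 𝕜 E]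
  [NormedAddCommGroup F] [InnerProductSpace 𝕜 F] {v : ι → E} {u : ι → F}

theorem Orthonormal.summable_smul [CompleteSpace E] (hv : Orthonormal 𝕜 v) {c : ι → 𝕜}
    (hc : Summable fun i => ‖c i‖ ^ 2) : Summable fun i => c i • v i :=
  (hv.orthogonalFamily.summable_iff_norm_sq_summable c).mpr hc

theorem Orthonormal.norm_tsum_smul_sq [CompleteSpace E] (hv : Orthonormal 𝕜 v) {c : ι → 𝕜}
    (hc : Summable fun i => ‖c i‖ ^ 2) : ‖∑' i, c i • v i‖ ^ 2 = ∑' i, ‖c i‖ ^ 2 := by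
  have hpartial : Tendsto (fun s : Finset ι => ‖∑ i ∈ s, c i • v i‖ ^ 2) atTop
      (𝓝 (‖∑' i, c i • v i‖ ^ 2)) :=
    ((hv.summable_smul hc).hasSum.norm).pow 2
  have hparseval : ∀ s : Finset ι, ‖∑ i ∈ s, c i • v i‖ ^ 2 = ∑ i ∈ s, ‖c i‖ ^ 2 :=
    hv.orthogonalFamily.norm_sum c
  simp only [hparseval] at hpartial
  exact tendsto_nhds_unique hpartial hc.hasSum

theorem Orthonormal.inner_tsum_smul {c : ι → 𝕜} (hv : Orthonormal 𝕜 v)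
    (hc : Summable fun i => c i • v i) (j : ι) : ⟪v j, ∑' i, c i • v i⟫_𝕜 = c j := by
  classical
  have h := hc.hasSum.mapL (innerSL 𝕜 (v j))
  simp only [innerSL_apply_apply, inner_smul_right, orthonormal_iff_ite.mp hv] at h
  simpa using h.tsum_eq.symm

theorem Orthonormal.hasSum_inner_smul_of_mem_closure_span [CompleteSpace E]
    (hv : Orthonormal 𝕜 v) {x : E} (hx : x ∈ (span 𝕜 (Set.range v)).topologicalClosure) :
    HasSum (fun i => ⟪v i, x⟫_𝕜 • v i) x := by
  set V := span 𝕜 (Set.range v)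
  have hsum : Summable fun i => ⟪v i, x⟫_𝕜 • v i :=
    hv.summable_smul (by simpa using hv.inner_products_summable x)
  suffices x - ∑' i, ⟪v i, x⟫_𝕜 • v i = 0 by
    have h := hsum.hasSum
    rwa [← sub_eq_zero.mp this] at h
  have hmem : x - ∑' i, ⟪v i, x⟫_𝕜 • v i ∈ V.topologicalClosure := by
    refine sub_mem hx (V.isClosed_topologicalClosure.mem_of_tendsto hsum.hasSum
      (Eventually.of_forall fun s => ?_))
    exact V.le_topologicalClosure (sum_mem fun i _ => smul_mem _ _ (subset_span ⟨i, rfl⟩))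
  have horth : x - ∑' i, ⟪v i, x⟫_𝕜 • v i ∈ V.topologicalClosureᗮ := by
    rw [orthogonal_closure, mem_orthogonal]
    intro w hw
    induction hw using span_induction with
    | mem _ h =>
      obtain ⟨j, rfl⟩ := h
      rw [inner_sub_right, hv.inner_tsum_smul hsum, sub_self]
    | zero => exact inner_zero_left _
    | add _ _ _ _ h₁ h₂ => rw [inner_add_left, h₁, h₂, add_zero]
    | smul a _ _ h => rw [inner_smul_left, h, mul_zero]
  simpa using (V.topologicalClosure.inf_orthogonal_eq_bot).le ⟨hmem, horth⟩

theorem Orthonormal.summable_norm_sq_of_le_inner (hu : Orthonormal 𝕜 u) {c : ι → 𝕜} {z : F}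
    {M : ℝ} (hc : ∀ i, ‖c i‖ ≤ M * ‖⟪u i, z⟫_𝕜‖) : Summable fun i => ‖c i‖ ^ 2 := by
  refine .of_nonneg_of_le (fun i => sq_nonneg _) (fun i => ?_)
    ((hu.inner_products_summable z).mul_left (M ^ 2))
  rw [← mul_pow]
  exact pow_le_pow_left₀ (norm_nonneg _) (hc i) 2

theorem Orthonormal.norm_tsum_smul_le_of_le_inner [CompleteSpace E] (hv : Orthonormal 𝕜 v)
    (hu : Orthonormal 𝕜 u) {c : ι → 𝕜} {z : F} {M : ℝ} (hM : 0 ≤ M)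
    (hc : ∀ i, ‖c i‖ ≤ M * ‖⟪u i, z⟫_𝕜‖) : ‖∑' i, c i • v i‖ ≤ M * ‖z‖ := by
  have hsq := hu.summable_norm_sq_of_le_inner hc
  refine (pow_le_pow_iff_left₀ (norm_nonneg _) (by positivity) two_ne_zero).mp ?_
  calc ‖∑' i, c i • v i‖ ^ 2 = ∑' i, ‖c i‖ ^ 2 := hv.norm_tsum_smul_sq hsq
    _ ≤ ∑' i, M ^ 2 * ‖⟪u i, z⟫_𝕜‖ ^ 2 :=
        hsq.tsum_le_tsum (fun i => by rw [← mul_pow]; gcongr; exact hc i)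
          ((hu.inner_products_summable z).mul_left _)
    _ = M ^ 2 * ∑' i, ‖⟪u i, z⟫_𝕜‖ ^ 2 := tsum_mul_left
    _ ≤ M ^ 2 * ‖z‖ ^ 2 := by gcongr; exact hu.tsum_inner_products_le z
    _ = (M * ‖z‖) ^ 2 := by ring

end Orthonormal

theorem abs_softThresh_sub_le {α : ℝ} (hα : 0 ≤ α) (t : ℝ) : |softThresh α t - t| ≤ |t| := by
  unfold softThresh
  split_ifs with h₁ h₂
  · rw [add_sub_cancel_left, abs_of_nonneg (by linarith), abs_of_nonpos (by linarith)]
    linarith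
  · rw [sub_sub_cancel_left, abs_neg, abs_of_nonneg (by linarith), abs_of_nonneg (by linarith)]
    linarith
  · simp

theorem abs_inv_mul_softThresh_mul_sub_le {α : ℝ} (hα : 0 ≤ α) (s t : ℝ) :
    |s⁻¹ * softThresh α (s * t) - t| ≤ |t| := by
  rcases eq_or_ne s 0 with rfl | hs
  · simp
  calc |s⁻¹ * softThresh α (s * t) - t| = |s|⁻¹ * |softThresh α (s * t) - s * t| := by
        rw [← abs_inv, ← abs_mul, mul_sub, inv_mul_cancel_left₀ hs]
    _ ≤ |s|⁻¹ * |s * t| :=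
        mul_le_mul_of_nonneg_left (abs_softThresh_sub_le hα _) (inv_nonneg.mpr (abs_nonneg s))
    _ = |t| := by rw [abs_mul, inv_mul_cancel_left₀ (abs_ne_zero.mpr hs)]

theorem l1SVD_error_estimate_range_adjoint_general {X Y : Type*}
    [NormedAddCommGroup X] [InnerProductSpace ℝ X] [CompleteSpace X]
    [NormedAddCommGroup Y] [InnerProductSpace ℝ Y] [CompleteSpace Y]
    (K : X →L[ℝ] Y)
    (σ : ℕ → ℝ) (v : ℕ → X) (u : ℕ → Y)
    (hσ : ∀ n, 0 < σ n) (hv : Orthonormal ℝ v) (hu : Orthonormal ℝ u)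
    (hKv : ∀ n, K (v n) = σ n • u n)
    (hKadj : ∀ n, (ContinuousLinearMap.adjoint K) (u n) = σ n • v n)
    (hvspan : (Submodule.span ℝ (Set.range v)).topologicalClosure
      = (LinearMap.range ((ContinuousLinearMap.adjoint K : Y →L[ℝ] X) : Y →ₗ[ℝ] X)).topologicalClosure)
    (α : ℝ) (c₁ : ℝ)
    (hσb : ∀ n, σ n ≤ c₁ * Real.sqrt α)
    (z : Y) (x : X) (hx : x = ContinuousLinearMap.adjoint K z) :
    ‖(∑' n, ((σ n ^ 2)⁻¹ * softThresh α (σ n * ⟪K x, u n⟫_ℝ)) • v n) - x‖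
      ≤ c₁ * Real.sqrt α * ‖z‖ := by
  have hM : 0 < c₁ * Real.sqrt α := (hσ 0).trans_le (hσb 0)
  have hα : 0 < α := Real.sqrt_ne_zero'.mp (right_ne_zero_of_mul hM.ne')
  have hKx : ∀ n, ⟪K x, u n⟫_ℝ = σ n * ⟪v n, x⟫_ℝ := fun n => by
    rw [← ContinuousLinearMap.adjoint_inner_right, hKadj, real_inner_smul_right, real_inner_comm]
  have hx_coeff : ∀ n, ⟪v n, x⟫_ℝ = σ n * ⟪u n, z⟫_ℝ := fun n => by
    rw [hx, ContinuousLinearMap.adjoint_inner_right, hKv, real_inner_smul_left]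
  have hx_sum : HasSum (fun n => ⟪v n, x⟫_ℝ • v n) x :=
    hv.hasSum_inner_smul_of_mem_closure_span
      (hvspan ▸ le_topologicalClosure _ ⟨z, hx.symm⟩)
  let e := fun n => (σ n ^ 2)⁻¹ * softThresh α (σ n * ⟪K x, u n⟫_ℝ) - ⟪v n, x⟫_ℝ
  have he : ∀ n, ‖e n‖ ≤ c₁ * Real.sqrt α * ‖⟪u n, z⟫_ℝ‖ := fun n => calc
    ‖e n‖ ≤ |⟪v n, x⟫_ℝ| := by
        dsimp only [e]
        rw [Real.norm_eq_abs, hKx, ← mul_assoc, ← sq]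
        exact abs_inv_mul_softThresh_mul_sub_le hα.le _ _
    _ = σ n * ‖⟪u n, z⟫_ℝ‖ := by rw [hx_coeff, abs_mul, abs_of_pos (hσ n), Real.norm_eq_abs]
    _ ≤ c₁ * Real.sqrt α * ‖⟪u n, z⟫_ℝ‖ := by gcongr; exact hσb n
  have he_sum := hv.summable_smul (hu.summable_norm_sq_of_le_inner he)
  have hdecomp : HasSum (fun n => ((σ n ^ 2)⁻¹ * softThresh α (σ n * ⟪K x, u n⟫_ℝ)) • v n)
      (∑' n, e n • v n + x) := by
    convert he_sum.hasSum.add hx_sum using 1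
    funext n
    rw [← add_smul, sub_add_cancel]
  rw [hdecomp.tsum_eq, add_sub_cancel_right]
  exact hv.norm_tsum_smul_le_of_le_inner hu hM.le he

/-- If `σ_n ≤ c₁ √α` for all `n` and `x = K* z`, then the `ℓ¹`-SVD reconstruction error
from exact data satisfies `‖∑ (1/σ_n²) S_α(σ_n ⟨K x, u_n⟩) v_n − x‖ ≤ c₁ √α ‖z‖`. -/
theorem l1SVD_error_estimate_range_adjoint {X Y : Type*}
    [NormedAddCommGroup X] [InnerProductSpace ℝ X] [CompleteSpace X]
    [NormedAddCommGroup Y] [InnerProductSpace ℝ Y] [CompleteSpace Y]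
    (K : X →L[ℝ] Y) (hK : IsCompactOperator K)
    (σ : ℕ → ℝ) (v : ℕ → X) (u : ℕ → Y)
    (hσ : ∀ n, 0 < σ n) (hv : Orthonormal ℝ v) (hu : Orthonormal ℝ u)
    (hKv : ∀ n, K (v n) = σ n • u n)
    (hKadj : ∀ n, (ContinuousLinearMap.adjoint K) (u n) = σ n • v n)
    (huspan : (Submodule.span ℝ (Set.range u)).topologicalClosure
      = (LinearMap.range (K : X →ₗ[ℝ] Y)).topologicalClosure)
    (hvspan : (Submodule.span ℝ (Set.range v)).topologicalClosure
      = (LinearMap.range ((ContinuousLinearMap.adjoint K : Y →L[ℝ] X) : Y →ₗ[ℝ] X)).topologicalClosure)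
    (α : ℝ) (hα : 0 < α) (c₁ : ℝ) (hc₁ : 0 < c₁)
    (hσb : ∀ n, σ n ≤ c₁ * Real.sqrt α)
    (z : Y) (x : X) (hx : x = ContinuousLinearMap.adjoint K z) :
    ‖(∑' n, ((σ n ^ 2)⁻¹ * softThresh α (σ n * ⟪K x, u n⟫_ℝ)) • v n) - x‖
      ≤ c₁ * Real.sqrt α * ‖z‖ :=
  l1SVD_error_estimate_range_adjoint_general K σ v u hσ hv hu hKv hKadj hvspan α c₁ hσb z x hx
end

section
/- Let {(σ_n, v_n, u_n)}_{n∈ℕ} be a singular system for the compact linear operator K : X → Y. Let y, y^δ ∈ Y with ‖y^δ − y‖ ≤ δ, let α > 0, and suppose c(α) > 0 satisfies c(α) σ_n ≥ 1 for every n such that |σ_n ⟨y^δ, u_n⟩| > α/2 or |σ_n ⟨y, u_n⟩| > α/2. Then the ℓ¹-SVD operator R_α y := ∑_n (1/σ_n²) S_α(σ_n ⟨y, u_n⟩) v_n satisfies the stability estimate ‖R_α y^δ − R_α y‖ ≤ c(α) δ. -/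
open scoped InnerProductSpace

lemma softThresh_lipschitz {α : ℝ} (hα : 0 ≤ α) (s t : ℝ) :
    |softThresh α s - softThresh α t| ≤ |s - t| := by
  have h1 := le_abs_self (s - t)
  have h2 := neg_abs_le (s - t)
  rw [abs_le]
  unfold softThresh
  split_ifs <;> constructor <;> linarith

lemma softThresh_eq_zero {α t : ℝ} (h : |t| ≤ α / 2) : softThresh α t = 0 := by
  rw [abs_le] at h
  unfold softThresh
  rcases h with ⟨h1, h2⟩
  split_ifs with ha hb
  · linarith
  · linarith
  · rfl

lemma abs_softThresh_le {α : ℝ} (hα : 0 ≤ α) (t : ℝ) : |softThresh α t| ≤ |t| := by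
  have h := softThresh_lipschitz hα t 0
  have h0 : softThresh α 0 = 0 := softThresh_eq_zero (by simpa using by linarith)
  simpa [h0] using h

/-- Stability of the `ℓ¹`-SVD operator: if `‖y^δ − y‖ ≤ δ` and `c(α) σ_n ≥ 1` for every `n`
on which either thresholded coefficient is active, then `‖R_α y^δ − R_α y‖ ≤ c(α) δ`. -/
theorem l1SVD_stability {X Y : Type*}
    [NormedAddCommGroup X] [InnerProductSpace ℝ X] [CompleteSpace X]
    [NormedAddCommGroup Y] [InnerProductSpace ℝ Y] [CompleteSpace Y]
    (K : X →L[ℝ] Y) (hK : IsCompactOperator K)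
    (σ : ℕ → ℝ) (v : ℕ → X) (u : ℕ → Y)
    (hσ : ∀ n, 0 < σ n) (hv : Orthonormal ℝ v) (hu : Orthonormal ℝ u)
    (hKv : ∀ n, K (v n) = σ n • u n)
    (hKadj : ∀ n, (ContinuousLinearMap.adjoint K) (u n) = σ n • v n)
    (y yδ : Y) (δ : ℝ) (hδ : ‖yδ - y‖ ≤ δ)
    (α : ℝ) (hα : 0 < α) (c : ℝ) (hc : 0 < c)
    (hcσ : ∀ n, (α / 2 < |σ n * ⟪yδ, u n⟫_ℝ| ∨ α / 2 < |σ n * ⟪y, u n⟫_ℝ|) → 1 ≤ c * σ n) :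
    ‖(∑' n, ((σ n ^ 2)⁻¹ * softThresh α (σ n * ⟪yδ, u n⟫_ℝ)) • v n)
        - (∑' n, ((σ n ^ 2)⁻¹ * softThresh α (σ n * ⟪y, u n⟫_ℝ)) • v n)‖
      ≤ c * δ := by
  set A : ℕ → ℝ := fun n => (σ n ^ 2)⁻¹ * softThresh α (σ n * ⟪yδ, u n⟫_ℝ) with hA
  set B : ℕ → ℝ := fun n => (σ n ^ 2)⁻¹ * softThresh α (σ n * ⟪y, u n⟫_ℝ) with hB
  have hσinv : ∀ n, (α / 2 < |σ n * ⟪yδ, u n⟫_ℝ| ∨ α / 2 < |σ n * ⟪y, u n⟫_ℝ|) →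
      (σ n)⁻¹ ≤ c := by
    intro n h
    have h1 := hcσ n h
    have h2 := hσ n
    have hcc : c * c⁻¹ = 1 := mul_inv_cancel₀ hc.ne'
    rw [inv_le_comm₀ h2 hc]
    nlinarith
  -- bound on individual coefficients of A
  have keyA : ∀ n, |A n| ≤ c * |⟪yδ, u n⟫_ℝ| := by
    intro n
    by_cases h : α / 2 < |σ n * ⟪yδ, u n⟫_ℝ|
    · have hci := hσinv n (Or.inl h)
      have hst := abs_softThresh_le hα.le (σ n * ⟪yδ, u n⟫_ℝ)
      have hpos := hσ n
      calc |A n| = (σ n ^ 2)⁻¹ * |softThresh α (σ n * ⟪yδ, u n⟫_ℝ)| := by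
            rw [hA, abs_mul, abs_of_nonneg (by positivity)]
        _ ≤ (σ n ^ 2)⁻¹ * (|σ n| * |⟪yδ, u n⟫_ℝ|) := by
            rw [← abs_mul]; exact mul_le_mul_of_nonneg_left hst (by positivity)
        _ = (σ n)⁻¹ * |⟪yδ, u n⟫_ℝ| := by
            rw [abs_of_pos hpos]; field_simp
        _ ≤ c * |⟪yδ, u n⟫_ℝ| := mul_le_mul_of_nonneg_right hci (abs_nonneg _)
    · push_neg at h
      have : softThresh α (σ n * ⟪yδ, u n⟫_ℝ) = 0 := softThresh_eq_zero h
      simp [hA, this]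
      positivity
  have keyB : ∀ n, |B n| ≤ c * |⟪y, u n⟫_ℝ| := by
    intro n
    by_cases h : α / 2 < |σ n * ⟪y, u n⟫_ℝ|
    · have hci := hσinv n (Or.inr h)
      have hst := abs_softThresh_le hα.le (σ n * ⟪y, u n⟫_ℝ)
      have hpos := hσ n
      calc |B n| = (σ n ^ 2)⁻¹ * |softThresh α (σ n * ⟪y, u n⟫_ℝ)| := by
            rw [hB, abs_mul, abs_of_nonneg (by positivity)]
        _ ≤ (σ n ^ 2)⁻¹ * (|σ n| * |⟪y, u n⟫_ℝ|) := by
            rw [← abs_mul]; exact mul_le_mul_of_nonneg_left hst (by positivity)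
        _ = (σ n)⁻¹ * |⟪y, u n⟫_ℝ| := by
            rw [abs_of_pos hpos]; field_simp
        _ ≤ c * |⟪y, u n⟫_ℝ| := mul_le_mul_of_nonneg_right hci (abs_nonneg _)
    · push_neg at h
      have : softThresh α (σ n * ⟪y, u n⟫_ℝ) = 0 := softThresh_eq_zero h
      simp [hB, this]
      positivity
  -- bound on the difference
  have keyD : ∀ n, |A n - B n| ≤ c * |⟪yδ - y, u n⟫_ℝ| := by
    intro n
    by_cases h : α / 2 < |σ n * ⟪yδ, u n⟫_ℝ| ∨ α / 2 < |σ n * ⟪y, u n⟫_ℝ|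
    · have hci := hσinv n h
      have hpos := hσ n
      have hlip := softThresh_lipschitz hα.le (σ n * ⟪yδ, u n⟫_ℝ) (σ n * ⟪y, u n⟫_ℝ)
      have hinner : ⟪yδ - y, u n⟫_ℝ = ⟪yδ, u n⟫_ℝ - ⟪y, u n⟫_ℝ := inner_sub_left _ _ _
      calc |A n - B n|
          = (σ n ^ 2)⁻¹ * |softThresh α (σ n * ⟪yδ, u n⟫_ℝ)
              - softThresh α (σ n * ⟪y, u n⟫_ℝ)| := by
            rw [hA, hB]
            rw [← mul_sub, abs_mul, abs_of_nonneg (by positivity)]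
        _ ≤ (σ n ^ 2)⁻¹ * |σ n * ⟪yδ, u n⟫_ℝ - σ n * ⟪y, u n⟫_ℝ| :=
            mul_le_mul_of_nonneg_left hlip (by positivity)
        _ = (σ n)⁻¹ * |⟪yδ - y, u n⟫_ℝ| := by
            rw [hinner, ← mul_sub, abs_mul, abs_of_pos hpos]
            field_simp
        _ ≤ c * |⟪yδ - y, u n⟫_ℝ| := mul_le_mul_of_nonneg_right hci (abs_nonneg _)
    · push_neg at h
      have h1 : softThresh α (σ n * ⟪yδ, u n⟫_ℝ) = 0 := softThresh_eq_zero h.1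
      have h2 : softThresh α (σ n * ⟪y, u n⟫_ℝ) = 0 := softThresh_eq_zero h.2
      simp [hA, hB, h1, h2]
      positivity
  have hof := hv.orthogonalFamily
  -- summability of coefficient squares
  have sqA : Summable fun n => ‖A n‖ ^ 2 := by
    refine Summable.of_nonneg_of_le (fun n => by positivity) (fun n => ?_)
      ((hu.inner_products_summable yδ).mul_left (c ^ 2))
    have := keyA n
    have h2 : ‖A n‖ ^ 2 ≤ (c * |⟪yδ, u n⟫_ℝ|) ^ 2 := by
      rw [Real.norm_eq_abs]
      exact pow_le_pow_left₀ (abs_nonneg _) this 2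
    calc ‖A n‖ ^ 2 ≤ (c * |⟪yδ, u n⟫_ℝ|) ^ 2 := h2
      _ = c ^ 2 * ‖⟪u n, yδ⟫_ℝ‖ ^ 2 := by
          rw [mul_pow, real_inner_comm, Real.norm_eq_abs, sq_abs]
  have sqB : Summable fun n => ‖B n‖ ^ 2 := by
    refine Summable.of_nonneg_of_le (fun n => by positivity) (fun n => ?_)
      ((hu.inner_products_summable y).mul_left (c ^ 2))
    have := keyB n
    have h2 : ‖B n‖ ^ 2 ≤ (c * |⟪y, u n⟫_ℝ|) ^ 2 := by
      rw [Real.norm_eq_abs]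
      exact pow_le_pow_left₀ (abs_nonneg _) this 2
    calc ‖B n‖ ^ 2 ≤ (c * |⟪y, u n⟫_ℝ|) ^ 2 := h2
      _ = c ^ 2 * ‖⟪u n, y⟫_ℝ‖ ^ 2 := by
          rw [mul_pow, real_inner_comm, Real.norm_eq_abs, sq_abs]
  have sumA : Summable fun n => A n • v n := by
    have := (hof.summable_iff_norm_sq_summable A).mpr sqA
    simpa only [LinearIsometry.toSpanSingleton_apply] using this
  have sumB : Summable fun n => B n • v n := by
    have := (hof.summable_iff_norm_sq_summable B).mpr sqB
    simpa only [LinearIsometry.toSpanSingleton_apply] using this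
  -- rewrite difference of tsums as a single tsum
  rw [← Summable.tsum_sub sumA sumB]
  have heq : ∀ n, A n • v n - B n • v n = (A n - B n) • v n := fun n => (sub_smul _ _ _).symm
  simp only [heq]
  have sumD : Summable fun n => (A n - B n) • v n := by
    simpa only [heq] using sumA.sub sumB
  -- norm of partial sums bounded by c * δ
  have hδ0 : 0 ≤ δ := le_trans (norm_nonneg _) hδ
  have hbound : ∀ s : Finset ℕ, ‖∑ n ∈ s, (A n - B n) • v n‖ ≤ c * δ := by
    intro s
    have hns : ‖∑ n ∈ s, (A n - B n) • v n‖ ^ 2 = ∑ n ∈ s, ‖A n - B n‖ ^ 2 := by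
      have := hof.norm_sum (fun n => A n - B n) s
      simpa only [LinearIsometry.toSpanSingleton_apply] using this
    have hle : ∑ n ∈ s, ‖A n - B n‖ ^ 2 ≤ c ^ 2 * ‖yδ - y‖ ^ 2 := by
      have h1 : ∑ n ∈ s, ‖A n - B n‖ ^ 2 ≤ ∑ n ∈ s, c ^ 2 * ‖⟪u n, yδ - y⟫_ℝ‖ ^ 2 := by
        refine Finset.sum_le_sum fun n _ => ?_
        have := keyD n
        calc ‖A n - B n‖ ^ 2 ≤ (c * |⟪yδ - y, u n⟫_ℝ|) ^ 2 := by
              rw [Real.norm_eq_abs]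
              exact pow_le_pow_left₀ (abs_nonneg _) this 2
          _ = c ^ 2 * ‖⟪u n, yδ - y⟫_ℝ‖ ^ 2 := by
              rw [mul_pow, real_inner_comm, Real.norm_eq_abs, sq_abs]
      have h2 : ∑ n ∈ s, ‖⟪u n, yδ - y⟫_ℝ‖ ^ 2 ≤ ‖yδ - y‖ ^ 2 :=
        hu.sum_inner_products_le (yδ - y)
      calc ∑ n ∈ s, ‖A n - B n‖ ^ 2 ≤ ∑ n ∈ s, c ^ 2 * ‖⟪u n, yδ - y⟫_ℝ‖ ^ 2 := h1
        _ = c ^ 2 * ∑ n ∈ s, ‖⟪u n, yδ - y⟫_ℝ‖ ^ 2 := by rw [Finset.mul_sum]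
        _ ≤ c ^ 2 * ‖yδ - y‖ ^ 2 := mul_le_mul_of_nonneg_left h2 (by positivity)
    have hsq : ‖∑ n ∈ s, (A n - B n) • v n‖ ^ 2 ≤ (c * δ) ^ 2 := by
      rw [hns]
      calc ∑ n ∈ s, ‖A n - B n‖ ^ 2 ≤ c ^ 2 * ‖yδ - y‖ ^ 2 := hle
        _ ≤ c ^ 2 * δ ^ 2 := by
            have := pow_le_pow_left₀ (norm_nonneg _) hδ 2
            exact mul_le_mul_of_nonneg_left this (by positivity)
        _ = (c * δ) ^ 2 := by ring
    have := Real.sqrt_le_sqrt hsq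
    rwa [Real.sqrt_sq (norm_nonneg _), Real.sqrt_sq (by positivity)] at this
  exact le_of_tendsto' sumD.hasSum.norm hbound
end

section
/- Let {(σ_n, v_n, u_n)}_{n∈ℕ} be a singular system for the compact linear operator K : X → Y such that (u_n) spans the closure of the range of K and (v_n) spans the closure of the range of K*. Let δ > 0, E > 0, c > 0, d₁ > 0, d₂ > 0, and set α = c (δ/E)^{1/2}. Suppose x = K* K z with ‖z‖ ≤ E, y^δ ∈ Y with ‖y^δ − K x‖ ≤ δ, that (d₁/α) σ_n ≥ 1 for every n with |σ_n ⟨y^δ, u_n⟩| > α/2 or |σ_n ⟨K x, u_n⟩| > α/2, and that σ_n² ≤ d₂ α for all n. Then the ℓ¹-SVD reconstruction x^{α,δ} := ∑_n (1/σ_n²) S_α(σ_n ⟨y^δ, u_n⟩) v_n satisfies ‖x^{α,δ} − x‖ ≤ (d₁/c + d₂ c) δ^{1/2} E^{1/2}. -/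
/-!
Write `x = ∑ ⟪x, v n⟫ v n`, which holds because `x = K* K z` lies in the closed span of the `v n`.
The coefficient error of the reconstruction splits into a data-noise part
`σ⁻² (S_α(σ ⟪y^δ, u⟫) - S_α(σ ⟪K x, u⟫))` and a bias part `σ⁻² (S_α(σ ⟪K x, u⟫) - σ ⟪K x, u⟫)`.
Since `S_α` is `1`-Lipschitz and vanishes below the threshold, the first is at most
`(d₁/α) |⟪y^δ - K x, u⟫|`; since `|S_α t - t| ≤ |t|` and `⟪K x, u⟫ = σ³ ⟪z, v⟫`, the second is at
most `σ² |⟪z, v⟫| ≤ d₂ α |⟪z, v⟫|`. Bessel's inequality then bounds the error by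
`(d₁/α) δ + d₂ α E`, which for `α = c (δ/E)^{1/2}` is the claimed rate.
-/

open scoped InnerProductSpace

section Orthonormal

variable {ι 𝕜 E F : Type*} [RCLike 𝕜] [NormedAddCommGroup E] [InnerProductSpace 𝕜 E]
  [NormedAddCommGroup F] [InnerProductSpace 𝕜 F] {v : ι → E} {u : ι → F}

theorem Orthonormal.summable_smul_of_norm_le [CompleteSpace E] (hv : Orthonormal 𝕜 v)
    (hu : Orthonormal 𝕜 u) {t : ι → 𝕜} {M : ℝ} {w : F} (ht : ∀ i, ‖t i‖ ≤ M * ‖⟪w, u i⟫_𝕜‖) :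
    Summable fun i => t i • v i := by
  have hsq (i : ι) : ‖t i‖ ^ 2 ≤ M ^ 2 * ‖⟪u i, w⟫_𝕜‖ ^ 2 := by
    simpa only [mul_pow, norm_inner_symm] using pow_le_pow_left₀ (norm_nonneg _) (ht i) 2
  refine (hv.orthogonalFamily.summable_iff_norm_sq_summable t).2 ?_
  exact ((hu.inner_products_summable w).mul_left _).of_nonneg_of_le (fun _ => by positivity) hsq

theorem Orthonormal.norm_tsum_smul_le [CompleteSpace E] (hv : Orthonormal 𝕜 v)
    (hu : Orthonormal 𝕜 u) {t : ι → 𝕜} {M : ℝ} (hM : 0 ≤ M) {w : F}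
    (ht : ∀ i, ‖t i‖ ≤ M * ‖⟪w, u i⟫_𝕜‖) :
    ‖∑' i, t i • v i‖ ≤ M * ‖w‖ := by
  have hpartial (s : Finset ι) : ‖∑ i ∈ s, t i • v i‖ ≤ M * ‖w‖ := by
    refine pow_le_pow_iff_left₀ (norm_nonneg _) (by positivity) two_ne_zero |>.1 ?_
    calc ‖∑ i ∈ s, t i • v i‖ ^ 2 = ∑ i ∈ s, ‖t i‖ ^ 2 := hv.orthogonalFamily.norm_sum t s
      _ ≤ ∑ i ∈ s, M ^ 2 * ‖⟪u i, w⟫_𝕜‖ ^ 2 := by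
        gcongr with i
        simpa only [mul_pow, norm_inner_symm] using pow_le_pow_left₀ (norm_nonneg _) (ht i) 2
      _ ≤ (M * ‖w‖) ^ 2 := by
        rw [← Finset.mul_sum, mul_pow]
        gcongr
        exact hu.sum_inner_products_le w
  exact le_of_tendsto' (hv.summable_smul_of_norm_le hu ht).hasSum.norm hpartial

theorem Orthonormal.hasSum_inner_smul_of_mem_topologicalClosure [CompleteSpace E]
    (hv : Orthonormal 𝕜 v) {x : E}
    (hx : x ∈ (Submodule.span 𝕜 (Set.range v)).topologicalClosure) :
    HasSum (fun i => ⟪v i, x⟫_𝕜 • v i) x := by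
  set V := (Submodule.span 𝕜 (Set.range v)).topologicalClosure
  have : CompleteSpace V := Submodule.isClosed_topologicalClosure _ |>.completeSpace_coe
  let v' (i : ι) : V := ⟨v i, Submodule.le_topologicalClosure _ (Submodule.subset_span ⟨i, rfl⟩)⟩
  have hspan : Subtype.val '' (Submodule.span 𝕜 (Set.range v') : Set V)
      = Submodule.span 𝕜 (Set.range v) := by
    rw [← Submodule.coe_subtype, ← Submodule.map_coe, Submodule.map_span, ← Set.range_comp]
    rfl
  let b := HilbertBasis.mk (v := v') (hv.codRestrict V _) (by
    rw [top_le_iff, ← Submodule.dense_iff_topologicalClosure_eq_top, Subtype.dense_iff]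
    exact (congrArg closure hspan).symm ▸ (Submodule.topologicalClosure_coe _).le)
  have hb : ⇑b = v' := HilbertBasis.coe_mk _ _
  simpa [b.repr_apply_apply, hb, v'] using (b.hasSum_repr ⟨x, hx⟩).mapL V.subtypeL

end Orthonormal

theorem ContinuousLinearMap.inner_apply_eq_mul_inner {E F : Type*} [NormedAddCommGroup E]
    [InnerProductSpace ℝ E] [CompleteSpace E] [NormedAddCommGroup F] [InnerProductSpace ℝ F]
    [CompleteSpace F] {A : E →L[ℝ] F} {σ : ℝ} {v : E} {u : F} (h : adjoint A u = σ • v) (w : E) :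
    ⟪A w, u⟫_ℝ = σ * ⟪w, v⟫_ℝ := by
  rw [← adjoint_inner_right, h, real_inner_smul_right]

theorem ContinuousLinearMap.inner_adjoint_apply_apply_eq_sq_mul_inner {E F : Type*}
    [NormedAddCommGroup E] [InnerProductSpace ℝ E] [CompleteSpace E] [NormedAddCommGroup F]
    [InnerProductSpace ℝ F] [CompleteSpace F] {A : E →L[ℝ] F} {σ : ℝ} {v : E} {u : F}
    (hv : A v = σ • u) (hu : adjoint A u = σ • v) (z : E) :
    ⟪adjoint A (A z), v⟫_ℝ = σ ^ 2 * ⟪z, v⟫_ℝ := by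
  rw [adjoint_inner_left, hv, real_inner_smul_right, A.inner_apply_eq_mul_inner hu]
  ring

section softThresh

variable {α : ℝ}

theorem softThresh_eq_zero_of_abs_le {t : ℝ} (h : |t| ≤ α / 2) : softThresh α t = 0 := by
  obtain ⟨h₁, h₂⟩ := abs_le.mp h
  unfold softThresh
  split_ifs <;> linarith

theorem abs_softThresh_sub_softThresh_le (hα : 0 ≤ α) (s t : ℝ) :
    |softThresh α s - softThresh α t| ≤ |s - t| := by
  unfold softThresh
  rcases abs_cases (s - t) with ⟨_, _⟩ | ⟨_, _⟩ <;>
    split_ifs <;> rw [abs_le] <;> constructor <;> linarith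

theorem abs_softThresh_sub_self_le (hα : 0 ≤ α) (t : ℝ) : |softThresh α t - t| ≤ |t| := by
  unfold softThresh
  rcases abs_cases t with ⟨_, _⟩ | ⟨_, _⟩ <;>
    split_ifs <;> rw [abs_le] <;> constructor <;> linarith

theorem abs_softThresh_sub_softThresh_div_sq_le (hα : 0 ≤ α) {s M : ℝ} (hs : 0 < s)
    (hM : 0 ≤ M) {a b : ℝ} (h : α / 2 < |s * a| ∨ α / 2 < |s * b| → 1 ≤ M * s) :
    |(softThresh α (s * a) - softThresh α (s * b)) / s ^ 2| ≤ M * |a - b| := by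
  by_cases hsmall : |s * a| ≤ α / 2 ∧ |s * b| ≤ α / 2
  · rw [softThresh_eq_zero_of_abs_le hsmall.1, softThresh_eq_zero_of_abs_le hsmall.2]
    simp only [sub_self, zero_div, abs_zero]
    positivity
  · have hMs : s⁻¹ ≤ M := by
      rw [inv_le_iff_one_le_mul₀ hs]
      exact h (by rw [not_and_or, not_le, not_le] at hsmall; exact hsmall)
    calc |(softThresh α (s * a) - softThresh α (s * b)) / s ^ 2|
        ≤ |s * a - s * b| / s ^ 2 := by
          rw [abs_div, abs_of_pos (by positivity : 0 < s ^ 2)]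
          exact div_le_div_of_nonneg_right (abs_softThresh_sub_softThresh_le hα _ _) (by positivity)
      _ = s⁻¹ * |a - b| := by
          rw [← mul_sub, abs_mul, abs_of_pos hs]
          field_simp
      _ ≤ M * |a - b| := by gcongr

theorem abs_softThresh_sub_self_div_sq_le (hα : 0 ≤ α) {s M : ℝ} (hs : 0 < s) (hsM : s ^ 2 ≤ M)
    (c : ℝ) : |(softThresh α (s * (s ^ 3 * c)) - s * (s ^ 3 * c)) / s ^ 2| ≤ M * |c| := by
  calc |(softThresh α (s * (s ^ 3 * c)) - s * (s ^ 3 * c)) / s ^ 2|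
      ≤ |s * (s ^ 3 * c)| / s ^ 2 := by
        rw [abs_div, abs_of_pos (by positivity : 0 < s ^ 2)]
        exact div_le_div_of_nonneg_right (abs_softThresh_sub_self_le hα _) (by positivity)
    _ = s ^ 2 * |c| := by
        rw [abs_mul, abs_mul, abs_of_pos hs, abs_of_pos (by positivity : 0 < s ^ 3)]
        field_simp
    _ ≤ M * |c| := by gcongr

end softThresh

theorem div_mul_add_mul_mul_eq_of_eq_mul_rpow {δ E c d₁ d₂ α : ℝ} (hδ : 0 < δ) (hE : 0 < E)
    (hc : 0 < c) (hα : α = c * (δ / E) ^ ((1 : ℝ) / 2)) :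
    d₁ / α * δ + d₂ * α * E = (d₁ / c + d₂ * c) * δ ^ ((1 : ℝ) / 2) * E ^ ((1 : ℝ) / 2) := by
  simp only [← Real.sqrt_eq_rpow, Real.sqrt_div' _ hE.le] at hα ⊢
  have hδ' := Real.sq_sqrt hδ.le
  have hE' := Real.sq_sqrt hE.le
  have : 0 < √δ := Real.sqrt_pos.2 hδ
  have : 0 < √E := Real.sqrt_pos.2 hE
  subst hα
  field_simp
  rw [hδ', hE']
  ring

theorem l1SVD_rate_one_half_general {X Y : Type*}
    [NormedAddCommGroup X] [InnerProductSpace ℝ X] [CompleteSpace X]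
    [NormedAddCommGroup Y] [InnerProductSpace ℝ Y] [CompleteSpace Y]
    (K : X →L[ℝ] Y)
    (σ : ℕ → ℝ) (v : ℕ → X) (u : ℕ → Y)
    (hσ : ∀ n, 0 < σ n) (hv : Orthonormal ℝ v) (hu : Orthonormal ℝ u)
    (hKv : ∀ n, K (v n) = σ n • u n)
    (hKadj : ∀ n, (ContinuousLinearMap.adjoint K) (u n) = σ n • v n)
    (hvspan : (Submodule.span ℝ (Set.range v)).topologicalClosure
      = (LinearMap.range ((ContinuousLinearMap.adjoint K : Y →L[ℝ] X) : Y →ₗ[ℝ] X)).topologicalClosure)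
    (δ E c d₁ d₂ : ℝ) (hδ : 0 < δ) (hE : 0 < E) (hc : 0 < c) (hd₁ : 0 < d₁) (hd₂ : 0 < d₂)
    (α : ℝ) (hαdef : α = c * (δ / E) ^ ((1 : ℝ) / 2))
    (z : X) (hz : ‖z‖ ≤ E) (x : X) (hx : x = ContinuousLinearMap.adjoint K (K z))
    (yδ : Y) (hyδ : ‖yδ - K x‖ ≤ δ)
    (hd₁σ : ∀ n, (α / 2 < |σ n * ⟪yδ, u n⟫_ℝ| ∨ α / 2 < |σ n * ⟪K x, u n⟫_ℝ|)
      → 1 ≤ d₁ / α * σ n)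
    (hd₂σ : ∀ n, σ n ^ 2 ≤ d₂ * α) :
    ‖(∑' n, ((σ n ^ 2)⁻¹ * softThresh α (σ n * ⟪yδ, u n⟫_ℝ)) • v n) - x‖
      ≤ (d₁ / c + d₂ * c) * δ ^ ((1 : ℝ) / 2) * E ^ ((1 : ℝ) / 2) := by
  have hα : 0 < α := hαdef ▸ by positivity
  have hxv (n : ℕ) : ⟪x, v n⟫_ℝ = σ n ^ 2 * ⟪z, v n⟫_ℝ :=
    hx ▸ K.inner_adjoint_apply_apply_eq_sq_mul_inner (hKv n) (hKadj n) z
  have hKxu (n : ℕ) : ⟪K x, u n⟫_ℝ = σ n ^ 3 * ⟪z, v n⟫_ℝ := by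
    rw [K.inner_apply_eq_mul_inner (hKadj n), hxv]
    ring
  set t₁ : ℕ → ℝ := fun n =>
    (softThresh α (σ n * ⟪yδ, u n⟫_ℝ) - softThresh α (σ n * ⟪K x, u n⟫_ℝ)) / σ n ^ 2
  set t₂ : ℕ → ℝ := fun n =>
    (softThresh α (σ n * ⟪K x, u n⟫_ℝ) - σ n * ⟪K x, u n⟫_ℝ) / σ n ^ 2
  have ht₁ (n : ℕ) : ‖t₁ n‖ ≤ d₁ / α * ‖⟪yδ - K x, u n⟫_ℝ‖ := by
    rw [Real.norm_eq_abs, Real.norm_eq_abs, inner_sub_left]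
    exact abs_softThresh_sub_softThresh_div_sq_le hα.le (hσ n) (by positivity) (hd₁σ n)
  have ht₂ (n : ℕ) : ‖t₂ n‖ ≤ d₂ * α * ‖⟪z, v n⟫_ℝ‖ := by
    simpa only [Real.norm_eq_abs, t₂, hKxu] using
      abs_softThresh_sub_self_div_sq_le hα.le (hσ n) (hd₂σ n) ⟪z, v n⟫_ℝ
  have hxsum : HasSum (fun n => ⟪v n, x⟫_ℝ • v n) x :=
    hv.hasSum_inner_smul_of_mem_topologicalClosure
      (hvspan ▸ Submodule.le_topologicalClosure _ ⟨K z, hx.symm⟩)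
  have hsplit : (fun n => ((σ n ^ 2)⁻¹ * softThresh α (σ n * ⟪yδ, u n⟫_ℝ)) • v n)
      = fun n => t₁ n • v n + t₂ n • v n + ⟪v n, x⟫_ℝ • v n := by
    ext n
    rw [← add_smul, ← add_smul, real_inner_comm x (v n), hxv]
    congr 1
    simp only [t₁, t₂, hKxu]
    field_simp [(hσ n).ne']
    ring
  rw [hsplit, (((hv.summable_smul_of_norm_le hu ht₁).hasSum.add
    (hv.summable_smul_of_norm_le hv ht₂).hasSum).add hxsum).tsum_eq, add_sub_cancel_right]
  calc ‖∑' n, t₁ n • v n + ∑' n, t₂ n • v n‖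
      ≤ ‖∑' n, t₁ n • v n‖ + ‖∑' n, t₂ n • v n‖ := norm_add_le _ _
    _ ≤ d₁ / α * ‖yδ - K x‖ + d₂ * α * ‖z‖ :=
        add_le_add (hv.norm_tsum_smul_le hu (by positivity) ht₁)
          (hv.norm_tsum_smul_le hv (by positivity) ht₂)
    _ ≤ d₁ / α * δ + d₂ * α * E := by gcongr
    _ = (d₁ / c + d₂ * c) * δ ^ ((1 : ℝ) / 2) * E ^ ((1 : ℝ) / 2) :=
        div_mul_add_mul_mul_eq_of_eq_mul_rpow hδ hE hc hαdef

/-- Error estimate for the `ℓ¹`-SVD method with the a priori choice `α = c (δ/E)^{1/2}`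
under the source condition `x = K* K z`, `‖z‖ ≤ E`:
`‖x^{α,δ} − x‖ ≤ (d₁/c + d₂ c) δ^{1/2} E^{1/2}`. -/
theorem l1SVD_rate_one_half {X Y : Type*}
    [NormedAddCommGroup X] [InnerProductSpace ℝ X] [CompleteSpace X]
    [NormedAddCommGroup Y] [InnerProductSpace ℝ Y] [CompleteSpace Y]
    (K : X →L[ℝ] Y) (hK : IsCompactOperator K)
    (σ : ℕ → ℝ) (v : ℕ → X) (u : ℕ → Y)
    (hσ : ∀ n, 0 < σ n) (hv : Orthonormal ℝ v) (hu : Orthonormal ℝ u)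
    (hKv : ∀ n, K (v n) = σ n • u n)
    (hKadj : ∀ n, (ContinuousLinearMap.adjoint K) (u n) = σ n • v n)
    (huspan : (Submodule.span ℝ (Set.range u)).topologicalClosure
      = (LinearMap.range (K : X →ₗ[ℝ] Y)).topologicalClosure)
    (hvspan : (Submodule.span ℝ (Set.range v)).topologicalClosure
      = (LinearMap.range ((ContinuousLinearMap.adjoint K : Y →L[ℝ] X) : Y →ₗ[ℝ] X)).topologicalClosure)
    (δ E c d₁ d₂ : ℝ) (hδ : 0 < δ) (hE : 0 < E) (hc : 0 < c) (hd₁ : 0 < d₁) (hd₂ : 0 < d₂)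
    (α : ℝ) (hαdef : α = c * (δ / E) ^ ((1 : ℝ) / 2))
    (z : X) (hz : ‖z‖ ≤ E) (x : X) (hx : x = ContinuousLinearMap.adjoint K (K z))
    (yδ : Y) (hyδ : ‖yδ - K x‖ ≤ δ)
    (hd₁σ : ∀ n, (α / 2 < |σ n * ⟪yδ, u n⟫_ℝ| ∨ α / 2 < |σ n * ⟪K x, u n⟫_ℝ|)
      → 1 ≤ d₁ / α * σ n)
    (hd₂σ : ∀ n, σ n ^ 2 ≤ d₂ * α) :
    ‖(∑' n, ((σ n ^ 2)⁻¹ * softThresh α (σ n * ⟪yδ, u n⟫_ℝ)) • v n) - x‖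
      ≤ (d₁ / c + d₂ * c) * δ ^ ((1 : ℝ) / 2) * E ^ ((1 : ℝ) / 2) :=
  l1SVD_rate_one_half_general K σ v u hσ hv hu hKv hKadj hvspan δ E c d₁ d₂ hδ hE hc hd₁ hd₂ α hαdef
    z hz x hx yδ hyδ hd₁σ hd₂σ
end
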